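/- Let L and R be finite nonempty families of pseudo-lines such that any two distinct members of L ∪ R cross exactly once, no three distinct members of L ∪ R take a common value at a common point, and l ≺ r holds for every l ∈ L and every r ∈ R. Let (v, w) ∈ L × R be the unique pair whose crossing lies on the upper envelope of L ∪ R. Fix r ∈ R and let l ∈ L be the member of L whose crossing with r has the largest x-coordinate among all crossings of r with members of L. If r' ∈ R is such that the crossing of r' with l has a larger x-coordinate than the crossing of r with l, then r' ≠ w. -/
import Mathlib


noncomputable local instance : DecidableEq (ℝ → ℝ) := Classical.decEq _

/-- `Prec f g` (written `f ≺ g`): the pseudo-lines `f` and `g` cross exactly once,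
at a point `x₀` with `f x > g x` for all `x < x₀` and `f x < g x` for all `x > x₀`. -/
def Prec (f g : ℝ → ℝ) : Prop :=
  ∃ x₀ : ℝ, f x₀ = g x₀ ∧ (∀ x < x₀, g x < f x) ∧ (∀ x > x₀, f x < g x)

/-- Two pseudo-lines cross exactly once. -/
def CrossesOnce (f g : ℝ → ℝ) : Prop :=
  Prec f g ∨ Prec g f

theorem prune_R_side
    (L R : Finset (ℝ → ℝ)) (hL : L.Nonempty) (hR : R.Nonempty)
    (hcont : ∀ f ∈ L ∪ R, Continuous f)
    (hcross : ∀ f ∈ L ∪ R, ∀ g ∈ L ∪ R, f ≠ g → CrossesOnce f g)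
    (hnothree : ∀ f ∈ L ∪ R, ∀ g ∈ L ∪ R, ∀ h ∈ L ∪ R, f ≠ g → f ≠ h → g ≠ h →
      ∀ x : ℝ, ¬(f x = g x ∧ g x = h x))
    (hprec : ∀ l ∈ L, ∀ r ∈ R, Prec l r)
    -- `(v, w)` is the unique pair in `L × R` whose crossing lies on
    -- the upper envelope of `L ∪ R`:
    (v w : ℝ → ℝ) (hv : v ∈ L) (hw : w ∈ R) (xvw : ℝ)
    (hvw : v xvw = w xvw)
    (henv : v xvw = (L ∪ R).sup' hL.inl (fun f => f xvw))
    (huniq : ∀ v' ∈ L, ∀ w' ∈ R, ∀ x : ℝ, v' x = w' x →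
      v' x = (L ∪ R).sup' hL.inl (fun f => f x) → v' = v ∧ w' = w)
    -- `r ∈ R` is fixed, and `l ∈ L` is the member of `L` whose crossing with `r`
    -- (at `xrl`) has the largest x-coordinate among all crossings of `r` with
    -- members of `L`:
    (r : ℝ → ℝ) (hr : r ∈ R) (l : ℝ → ℝ) (hl : l ∈ L) (xrl : ℝ)
    (hxrl : r xrl = l xrl)
    (hmax : ∀ l'' ∈ L, ∀ x : ℝ, r x = l'' x → x ≤ xrl)
    -- `r' ∈ R` crosses `l` (at `x'`) strictly to the right of `xrl`:
    (r' : ℝ → ℝ) (hr' : r' ∈ R) (x' : ℝ) (hx' : r' x' = l x')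
    (hgt : xrl < x') :
    r' ≠ w := by
  intro heq
  subst heq
  -- `x'` is the crossing of `l` and `w`
  obtain ⟨x₀, he, hlt, hgt'⟩ := hprec l hl r' hr'
  have hx0 : x' = x₀ := by
    rcases lt_trichotomy x' x₀ with h | h | h
    · exact absurd hx'.symm (ne_of_gt (hlt x' h))
    · exact h
    · exact absurd hx' (ne_of_gt (hgt' x' h))
  subst hx0
  -- at `xvw`, `l` is below the envelope value `w xvw`, so `x' ≤ xvw`
  have hmemL : l ∈ L ∪ R := Finset.mem_union_left _ hl
  have hle : l xvw ≤ r' xvw := by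
    calc l xvw ≤ (L ∪ R).sup' hL.inl (fun f => f xvw) :=
          Finset.le_sup' (fun f => f xvw) hmemL
      _ = v xvw := henv.symm
      _ = r' xvw := hvw
  have hxle : x' ≤ xvw := by
    by_contra h
    push_neg at h
    exact absurd hle (not_le.mpr (hlt xvw h))
  -- crossing of `v` and `r` is at some `xvr ≤ xrl`
  obtain ⟨xvr, he2, _, hgt2⟩ := hprec v hv r hr
  have hvr : xvr ≤ xrl := hmax v hv xvr he2.symm
  have hxvw : xvr < xvw := lt_of_le_of_lt hvr (lt_of_lt_of_le hgt hxle)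
  have h1 : v xvw < r xvw := hgt2 xvw hxvw
  have h2 : r xvw ≤ v xvw := by
    calc r xvw ≤ (L ∪ R).sup' hL.inl (fun f => f xvw) :=
          Finset.le_sup' (fun f => f xvw) (Finset.mem_union_right _ hr)
      _ = v xvw := henv.symm
  exact absurd h2 (not_le.mpr h1)
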